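/- arXiv:1806.10424 — 2 statements merged into one kernel-verified Lean document; each statement's English description precedes it below -/
import Mathlib

section
/- Let n and α be positive integers with α < n and n ≥ 2α, and let the graph G' arise from F(n,α) by adding an edge uv between two non-adjacent vertices u and v of F(n,α). Then the independence number of G' equals α and ♯α(G') < f(n,α). -/
open Finset

/-- A finset of vertices is independent in `G`: pairwise non-adjacent. -/
def IsIndepFinset {V : Type*} (G : SimpleGraph V) (s : Finset V) : Prop :=
  ∀ ⦃u⦄, u ∈ s → ∀ ⦃v⦄, v ∈ s → u ≠ v → ¬ G.Adj u v

/-- The independence number of a finite graph. -/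
noncomputable def indepNumber {V : Type*} [Fintype V] (G : SimpleGraph V) : ℕ :=
  sSup {k | ∃ s : Finset V, IsIndepFinset G s ∧ s.card = k}

/-- The number `♯α(G)` of maximum independent sets of `G`. -/
noncomputable def numMaxIndep {V : Type*} [Fintype V] (G : SimpleGraph V) : ℕ :=
  Set.ncard {s : Finset V | IsIndepFinset G s ∧ s.card = indepNumber G}

/-- The number `♯α(G,u)` of maximum independent sets of `G` containing `u`. -/
noncomputable def numMaxIndepOn {V : Type*} [Fintype V] (G : SimpleGraph V) (u : V) : ℕ :=
  Set.ncard {s : Finset V | IsIndepFinset G s ∧ s.card = indepNumber G ∧ u ∈ s}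

/-- `g(n,α) = ⌊n/α⌋^(α − n mod α) ⌈n/α⌉^(n mod α)`. -/
def gFun (n a : ℕ) : ℕ := (n / a) ^ (a - n % a) * ((n + a - 1) / a) ^ (n % a)

/-- `t(n,α) = ∏_{i=1}^{α−1} (|C_i| − 1)`, where `|C_i| = ⌊n/α⌋ + 1` for `i < n mod α`
and `|C_i| = ⌊n/α⌋` otherwise. -/
def tFun (n a : ℕ) : ℕ := ∏ i ∈ Finset.Ico 1 a, (n / a + (if i < n % a then 1 else 0) - 1)

/-- `f(n,α) = g(n−1,α) + t(n,α)`. -/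
def fFun (n a : ℕ) : ℕ := gFun (n - 1) a + tFun n a

/-- `G(n,α)`: complement of the Turán graph, i.e. the disjoint union of `α` cliques
(the residue classes mod `α`), each of order `⌈n/α⌉` or `⌊n/α⌋`. -/
def Ggraph (n a : ℕ) : SimpleGraph (Fin n) where
  Adj v w := v ≠ w ∧ v.val % a = w.val % a
  symm := ⟨by intro v w h; exact ⟨h.1.symm, h.2.symm⟩⟩
  loopless := ⟨by intro v h; exact h.1 rfl⟩

/-- `F(n,α)`: `G(n,α)` plus the edges `x₀x₁, …, x₀x_{α−1}`, where `x_i` is the vertex `i`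
of the clique `C_i` (the residue class of `i` mod `α`); `x₀ = 0` is the special cutvertex,
lying in the clique `C₀` of order `⌈n/α⌉`. -/
def Fgraph (n a : ℕ) : SimpleGraph (Fin n) where
  Adj v w := v ≠ w ∧
    (v.val % a = w.val % a ∨ (v.val = 0 ∧ w.val < a) ∨ (w.val = 0 ∧ v.val < a))
  symm := ⟨by intro v w h; exact ⟨h.1.symm, by tauto⟩⟩
  loopless := ⟨by intro v h; exact h.1 rfl⟩


/-! Distinct vertices of an independent set of `F(n,α)` lie in distinct classes `C_i`, so a
maximum independent set picks one vertex from each class. If it contains the cutvertex `0`, its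
other vertices avoid `x_1, …, x_{α-1}`: `t(n,α)` choices; otherwise there are
`(|C_0| - 1) ∏_{i ≥ 1} |C_i| = g(n-1,α)` choices. Hence `♯α(F) ≤ f(n,α)`. Adding the non-edge `uv`
does not lower the independence number, but it kills the maximum independent set of `F` formed by
`u`, `v` and vertices of the second row `α, …, 2α-1`, so `♯α(G') < ♯α(F)`. -/

theorem IsIndepFinset.anti {V : Type*} {G H : SimpleGraph V} (hGH : G ≤ H) {s : Finset V}
    (hs : IsIndepFinset H s) : IsIndepFinset G s :=
  fun _ hu _ hv huv hadj => hs hu hv huv (hGH hadj)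

theorem IsIndepFinset.sup_edge {V : Type*} {G : SimpleGraph V} {s : Finset V} {u v : V}
    (hs : IsIndepFinset G s) (huv : ¬ (u ∈ s ∧ v ∈ s)) :
    IsIndepFinset (G ⊔ SimpleGraph.fromEdgeSet {s(u, v)}) s := by
  rintro x hx y hy hxy (hadj | ⟨hedge, -⟩)
  · exact hs hx hy hxy hadj
  · rcases Sym2.eq_iff.1 (Set.mem_singleton_iff.1 hedge) with ⟨rfl, rfl⟩ | ⟨rfl, rfl⟩
    · exact huv ⟨hx, hy⟩
    · exact huv ⟨hy, hx⟩

theorem indepNumber_eq {V : Type*} [Fintype V] {G : SimpleGraph V} {k : ℕ}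
    (hle : ∀ s, IsIndepFinset G s → #s ≤ k) (hex : ∃ s, IsIndepFinset G s ∧ #s = k) :
    indepNumber G = k := by
  have hub : ∀ m ∈ {k | ∃ s : Finset V, IsIndepFinset G s ∧ #s = k}, m ≤ k := by
    rintro _ ⟨s, hs, rfl⟩
    exact hle s hs
  exact le_antisymm (csSup_le ⟨k, hex⟩ hub) (le_csSup ⟨k, hub⟩ hex)

theorem numMaxIndep_lt_of_le {V : Type*} [Fintype V] {G H : SimpleGraph V} (hGH : G ≤ H)
    (hα : indepNumber H = indepNumber G) {s : Finset V} (hs : IsIndepFinset G s)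
    (hcard : #s = indepNumber G) (hsH : ¬ IsIndepFinset H s) :
    numMaxIndep H < numMaxIndep G :=
  Set.ncard_lt_ncard
    ⟨fun _ ⟨ht, htcard⟩ => ⟨ht.anti hGH, htcard.trans hα⟩, fun hsub => hsH (hsub ⟨hs, hcard⟩).1⟩
    (Set.toFinite _)

theorem Finset.prod_range_add_ite_lt (q r a : ℕ) (hr : r ≤ a) :
    ∏ i ∈ range a, (q + if i < r then 1 else 0) = (q + 1) ^ r * q ^ (a - r) := by
  have hlow : ∏ i ∈ range r, (q + if i < r then 1 else 0) = ∏ _i ∈ range r, (q + 1) :=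
    prod_congr rfl fun i hi => by simp [mem_range.1 hi]
  have hhigh : ∏ i ∈ Ico r a, (q + if i < r then 1 else 0) = ∏ _i ∈ Ico r a, q :=
    prod_congr rfl fun i hi => by simp [(mem_Ico.1 hi).1]
  rw [← prod_range_mul_prod_Ico _ hr, hlow, hhigh]
  simp

theorem gFun_eq_prod_range {m a : ℕ} (ha : 0 < a) :
    gFun m a = ∏ i ∈ range a, (m / a + if i < m % a then 1 else 0) := by
  rw [prod_range_add_ite_lt _ _ _ (Nat.mod_lt m ha).le, gFun, mul_comm]
  rcases Nat.eq_zero_or_pos (m % a) with hr | hr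
  · simp [hr]
  · have hm : m + a - 1 = (m % a - 1) + a * (m / a + 1) := by
      have := Nat.div_add_mod m a
      rw [mul_add_one]
      generalize m / a = q at *
      generalize m % a = r at *
      omega
    rw [hm, Nat.add_mul_div_left _ _ ha, Nat.div_eq_of_lt (by have := Nat.mod_lt m ha; omega),
      zero_add]

/-- The class sizes of `G(n-1,α)` are those of `G(n,α)` shifted down by one index, the size of
`C_0` (decreased by one) moving to the last place. -/
theorem div_add_ite_pred {n a i : ℕ} (ha : 0 < a) (hn : 0 < n) :
    (n - 1) / a + (if i < (n - 1) % a then 1 else 0) =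
      if i + 1 < a then n / a + (if i + 1 < n % a then 1 else 0)
      else n / a + (if 0 < n % a then 1 else 0) - 1 := by
  have hdm := Nat.div_add_mod n a
  have hr := Nat.mod_lt n ha
  rcases Nat.eq_zero_or_pos (n % a) with h0 | hpos
  · have hq : 0 < n / a := by
      rcases Nat.eq_zero_or_pos (n / a) with h | h
      · rw [h, h0] at hdm; omega
      · exact h
    obtain ⟨hq', hr'⟩ : (n - 1) / a = n / a - 1 ∧ (n - 1) % a = a - 1 := by
      rw [Nat.div_mod_unique ha, Nat.mul_sub_one]
      have := Nat.le_mul_of_pos_right a hq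
      omega
    rw [hq', hr', h0]
    split_ifs <;> omega
  · obtain ⟨hq', hr'⟩ : (n - 1) / a = n / a ∧ (n - 1) % a = n % a - 1 := by
      rw [Nat.div_mod_unique ha]
      omega
    rw [hq', hr']
    generalize n % a = r at *
    generalize n / a = q at *
    split_ifs <;> omega

theorem gFun_pred_eq {n a : ℕ} (ha : 0 < a) (hn : 0 < n) :
    gFun (n - 1) a = (n / a + (if 0 < n % a then 1 else 0) - 1) *
      ∏ i ∈ Ico 1 a, (n / a + if i < n % a then 1 else 0) := by
  obtain ⟨k, rfl⟩ : ∃ k, a = k + 1 := ⟨a - 1, by omega⟩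
  rw [gFun_eq_prod_range ha, prod_range_succ, prod_Ico_eq_prod_range, mul_comm,
    div_add_ite_pred ha hn, if_neg (by omega)]
  congr 1
  refine prod_congr rfl fun i hi => ?_
  rw [div_add_ite_pred ha hn, if_pos (by rw [mem_range] at hi; omega), add_comm 1 i]

def resClass (n a i : ℕ) : Finset (Fin n) := {x | x.val % a = i}

theorem card_resClass {n a i : ℕ} (ha : 0 < a) (hi : i < a) :
    #(resClass n a i) = n / a + if i < n % a then 1 else 0 := by
  have hcount := Nat.count_modEq_card n ha i
  rw [Nat.mod_eq_of_lt hi, Nat.count_eq_card_filter_range, ← Nat.Iio_eq_range,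
    ← Fin.map_valEmbedding_univ, filter_map, card_map] at hcount
  rw [← hcount, resClass]
  congr 1
  ext x
  simp [Nat.ModEq, Nat.mod_eq_of_lt hi]

theorem resClass_filter_val_lt {n a i : ℕ} (hi : i < a) (han : a ≤ n) :
    {x ∈ resClass n a i | x.val < a} = {⟨i, hi.trans_le han⟩} := by
  ext x
  simp only [resClass, mem_filter, mem_univ, true_and, mem_singleton, Fin.ext_iff]
  constructor
  · rintro ⟨hx, hxa⟩
    rwa [Nat.mod_eq_of_lt hxa] at hx
  · rintro rfl
    exact ⟨Nat.mod_eq_of_lt hi, hi⟩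

theorem card_resClass_filter_not_val_lt {n a i : ℕ} (ha : 0 < a) (hi : i < a) (han : a ≤ n) :
    #{x ∈ resClass n a i | ¬ x.val < a} = n / a + (if i < n % a then 1 else 0) - 1 := by
  rw [filter_not, card_sdiff_of_subset (filter_subset _ _), resClass_filter_val_lt hi han,
    card_singleton, card_resClass ha hi]

/-- The admissible vertices of class `i` in a maximum independent set of `F(n,α)` that contains
the cutvertex `0`: only class `0` may use the first row `0, …, α-1`. -/
def cutChoices (n a : ℕ) (i : Fin a) : Finset (Fin n) :=
  {x ∈ resClass n a i | x.val < a ↔ i.val = 0}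

def cutFreeChoices (n a : ℕ) (i : Fin a) : Finset (Fin n) :=
  {x ∈ resClass n a i | x.val ≠ 0}

theorem card_cutChoices {n a : ℕ} (ha : 0 < a) (han : a ≤ n) (i : Fin a) :
    #(cutChoices n a i) =
      if i.val = 0 then 1 else n / a + (if i.val < n % a then 1 else 0) - 1 := by
  by_cases hi : i.val = 0
  · rw [if_pos hi, cutChoices, filter_congr fun x _ => iff_true_right hi,
      resClass_filter_val_lt i.isLt han, card_singleton]
  · rw [if_neg hi, cutChoices, filter_congr fun x _ => iff_false_right hi,
      card_resClass_filter_not_val_lt ha i.isLt han]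

theorem card_cutFreeChoices {n a : ℕ} (ha : 0 < a) (han : a ≤ n) (i : Fin a) :
    #(cutFreeChoices n a i) =
      n / a + (if i.val < n % a then 1 else 0) - if i.val = 0 then 1 else 0 := by
  by_cases hi : i.val = 0
  · have hcongr : ∀ x ∈ resClass n a i, x.val ≠ 0 ↔ ¬ x.val < a := fun x hx => by
      simp only [resClass, mem_filter, mem_univ, true_and, hi] at hx
      constructor
      · intro hx0 hxa
        exact hx0 (by rwa [Nat.mod_eq_of_lt hxa] at hx)
      · intro hxa hx0
        exact hxa (hx0 ▸ ha)
    rw [if_pos hi, cutFreeChoices, filter_congr hcongr,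
      card_resClass_filter_not_val_lt ha i.isLt han]
  · have hnonzero : ∀ x ∈ resClass n a i, x.val ≠ 0 := fun x hx h0 => by
      simp only [resClass, mem_filter, mem_univ, true_and, h0, Nat.zero_mod] at hx
      exact hi hx.symm
    rw [if_neg hi, cutFreeChoices, filter_true_of_mem hnonzero, card_resClass ha i.isLt,
      Nat.sub_zero]

theorem prod_card_cutChoices {n a : ℕ} (ha : 0 < a) (han : a ≤ n) :
    ∏ i, #(cutChoices n a i) = tFun n a := by
  simp only [card_cutChoices ha han]
  rw [Fin.prod_univ_eq_prod_range
      (fun i => if i = 0 then 1 else n / a + (if i < n % a then 1 else 0) - 1),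
    prod_range_eq_mul_Ico _ ha, if_pos rfl, one_mul, tFun]
  exact prod_congr rfl fun i hi => if_neg (by rw [mem_Ico] at hi; omega)

theorem prod_card_cutFreeChoices {n a : ℕ} (ha : 0 < a) (han : a ≤ n) :
    ∏ i, #(cutFreeChoices n a i) = gFun (n - 1) a := by
  simp only [card_cutFreeChoices ha han]
  rw [Fin.prod_univ_eq_prod_range
      (fun i => n / a + (if i < n % a then 1 else 0) - if i = 0 then 1 else 0),
    prod_range_eq_mul_Ico _ ha, if_pos rfl, gFun_pred_eq ha (ha.trans_le han)]
  exact congrArg _ (prod_congr rfl fun i hi => by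
    rw [mem_Ico] at hi
    simp [show i ≠ 0 by omega])

section residues

variable {n a : ℕ}

theorem Ggraph_le_Fgraph : Ggraph n a ≤ Fgraph n a := fun _ _ h => ⟨h.1, Or.inl h.2⟩

theorem IsIndepFinset.injOn_val_mod {s : Finset (Fin n)} (hs : IsIndepFinset (Ggraph n a) s) :
    Set.InjOn (fun x : Fin n => x.val % a) s :=
  fun _ hx _ hy h => by_contra fun hne => hs hx hy hne ⟨hne, h⟩

theorem IsIndepFinset.card_le_of_Ggraph (ha : 0 < a) {s : Finset (Fin n)}
    (hs : IsIndepFinset (Ggraph n a) s) : #s ≤ a :=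
  (card_le_card_of_injOn _ (fun x _ => mem_range.2 (Nat.mod_lt x.val ha))
    hs.injOn_val_mod).trans (card_range a).le

variable {c : Fin a → Fin n}

theorem injective_of_val_mod (hc : ∀ i, (c i).val % a = i) : Function.Injective c :=
  fun i j h => Fin.ext (by rw [← hc i, ← hc j, h])

theorem card_image_univ_of_val_mod (hc : ∀ i, (c i).val % a = i) : #(univ.image c) = a := by
  rw [card_image_of_injective _ (injective_of_val_mod hc), card_univ, Fintype.card_fin]

theorem IsIndepFinset.exists_eq_image_univ (ha : 0 < a) {s : Finset (Fin n)}
    (hs : IsIndepFinset (Ggraph n a) s) (hcard : #s = a) :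
    ∃ c : Fin a → Fin n, (∀ i, (c i).val % a = i) ∧ s = univ.image c := by
  have himage : s.image (fun x : Fin n => x.val % a) = range a := by
    refine eq_of_subset_of_card_le (fun j hj => ?_) ?_
    · obtain ⟨x, -, rfl⟩ := mem_image.1 hj
      exact mem_range.2 (Nat.mod_lt _ ha)
    · rw [card_range, card_image_of_injOn hs.injOn_val_mod, hcard]
  have hsurj : ∀ i : Fin a, ∃ x ∈ s, x.val % a = i := fun i =>
    mem_image.1 (himage ▸ mem_range.2 i.isLt)
  choose c hcs hc using hsurj
  refine ⟨c, hc, (eq_of_subset_of_card_le (fun x hx => ?_) ?_).symm⟩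
  · obtain ⟨i, -, rfl⟩ := mem_image.1 hx
    exact hcs i
  · rw [hcard, card_image_univ_of_val_mod hc]

theorem isIndepFinset_Fgraph_image_univ_iff (hc : ∀ i, (c i).val % a = i) :
    IsIndepFinset (Fgraph n a) (univ.image c) ↔
      ∀ i j, (c i).val = 0 → i ≠ j → a ≤ (c j).val := by
  have hinj := injective_of_val_mod hc
  constructor
  · intro hs i j hi0 hij
    by_contra! hja
    exact hs (mem_image_of_mem c (mem_univ i)) (mem_image_of_mem c (mem_univ j))
      (hinj.ne hij) ⟨hinj.ne hij, Or.inr (Or.inl ⟨hi0, hja⟩)⟩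
  · intro h _ hx _ hy hxy hadj
    obtain ⟨i, -, rfl⟩ := mem_image.1 hx
    obtain ⟨j, -, rfl⟩ := mem_image.1 hy
    have hij : i ≠ j := fun hij => hxy (hij ▸ rfl)
    rcases hadj.2 with hres | ⟨hi0, hja⟩ | ⟨hj0, hia⟩
    · exact hij (Fin.ext (by rw [← hc i, ← hc j, hres]))
    · exact (h i j hi0 hij).not_gt hja
    · exact (h j i hj0 hij.symm).not_gt hia

theorem isIndepFinset_Fgraph_image_univ_of_ne_zero (hc : ∀ i, (c i).val % a = i)
    (h0 : ∀ i, (c i).val ≠ 0) : IsIndepFinset (Fgraph n a) (univ.image c) :=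
  (isIndepFinset_Fgraph_image_univ_iff hc).2 fun i _ hi0 => absurd hi0 (h0 i)

theorem mem_piFinset_cutChoices_or_cutFreeChoices (ha : 0 < a) (hc : ∀ i, (c i).val % a = i)
    (hind : ∀ i j, (c i).val = 0 → i ≠ j → a ≤ (c j).val) :
    c ∈ Fintype.piFinset (cutChoices n a) ∨ c ∈ Fintype.piFinset (cutFreeChoices n a) := by
  simp only [Fintype.mem_piFinset, cutChoices, cutFreeChoices, resClass, mem_filter, mem_univ,
    true_and]
  by_cases h0 : (c ⟨0, ha⟩).val = 0
  · left
    intro i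
    refine ⟨hc i, ⟨fun hia => ?_, fun hi => ?_⟩⟩
    · by_contra hi
      exact (hind ⟨0, ha⟩ i h0 (fun h => hi (congrArg Fin.val h).symm)).not_gt hia
    · rw [show i = ⟨0, ha⟩ from Fin.ext hi, h0]
      exact ha
  · right
    intro i
    refine ⟨hc i, fun hi0 => h0 ?_⟩
    rw [show (⟨0, ha⟩ : Fin a) = i from Fin.ext (by rw [← hc i, hi0, Nat.zero_mod])]
    exact hi0

theorem ncard_maxIndep_Fgraph_le (ha : 0 < a) (han : a ≤ n) :
    {s : Finset (Fin n) | IsIndepFinset (Fgraph n a) s ∧ #s = a}.ncard ≤ fFun n a := by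
  have hsub : {s : Finset (Fin n) | IsIndepFinset (Fgraph n a) s ∧ #s = a} ⊆
      ↑((Fintype.piFinset (cutChoices n a) ∪ Fintype.piFinset (cutFreeChoices n a)).image
        (univ.image ·)) := by
    rintro s ⟨hs, hcard⟩
    obtain ⟨c, hc, rfl⟩ := (hs.anti Ggraph_le_Fgraph).exists_eq_image_univ ha hcard
    rw [isIndepFinset_Fgraph_image_univ_iff hc] at hs
    exact mem_image_of_mem _ (mem_union.2 (mem_piFinset_cutChoices_or_cutFreeChoices ha hc hs))
  calc _ ≤ _ := Set.ncard_le_ncard hsub (finite_toSet _)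
    _ ≤ _ := (Set.ncard_coe_finset _).trans_le card_image_le
    _ ≤ _ := card_union_le _ _
    _ = fFun n a := by
      rw [Fintype.card_piFinset, Fintype.card_piFinset, prod_card_cutChoices ha han,
        prod_card_cutFreeChoices ha han, fFun, add_comm]

def upperRow (n a : ℕ) (h2a : 2 * a ≤ n) (i : Fin a) : Fin n := ⟨a + i, by omega⟩

theorem upperRow_val_mod (h2a : 2 * a ≤ n) (i : Fin a) : (upperRow n a h2a i).val % a = i := by
  rw [upperRow, Nat.add_mod_left, Nat.mod_eq_of_lt i.isLt]

theorem upperRow_val_ne_zero (ha : 0 < a) (h2a : 2 * a ≤ n) (i : Fin a) :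
    (upperRow n a h2a i).val ≠ 0 := by
  simp only [upperRow]
  omega

theorem indepNumber_Fgraph (ha : 0 < a) (h2a : 2 * a ≤ n) : indepNumber (Fgraph n a) = a :=
  indepNumber_eq (fun _ hs => (hs.anti Ggraph_le_Fgraph).card_le_of_Ggraph ha)
    ⟨_, isIndepFinset_Fgraph_image_univ_of_ne_zero (upperRow_val_mod h2a)
      (upperRow_val_ne_zero ha h2a), card_image_univ_of_val_mod (upperRow_val_mod h2a)⟩

theorem numMaxIndep_Fgraph_le (ha : 0 < a) (h2a : 2 * a ≤ n) :
    numMaxIndep (Fgraph n a) ≤ fFun n a := by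
  rw [numMaxIndep, indepNumber_Fgraph ha h2a]
  exact ncard_maxIndep_Fgraph_le ha (by omega)

theorem exists_maxIndep_Fgraph_not_mem_both (ha : 0 < a) (h2a : 2 * a ≤ n) {u v : Fin n}
    (huv : u ≠ v) : ∃ s, IsIndepFinset (Fgraph n a) s ∧ #s = a ∧ ¬ (u ∈ s ∧ v ∈ s) := by
  set upper := univ.image (upperRow n a h2a)
  -- `lower` meets `upper` only in the vertex `a`, so one of them misses `u` or `v`
  set lower := univ.image fun i : Fin a =>
    if i.val = 0 then upperRow n a h2a i else ⟨i, by omega⟩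
  have hlower : ∀ i : Fin a,
      (if i.val = 0 then upperRow n a h2a i else ⟨i, by omega⟩ : Fin n).val % a = i := by
    intro i
    split_ifs
    · exact upperRow_val_mod h2a i
    · exact Nat.mod_eq_of_lt i.isLt
  have hinter : ∀ x ∈ upper, x ∈ lower → x.val = a := by
    intro x hx hx'
    obtain ⟨i, -, rfl⟩ := mem_image.1 hx
    obtain ⟨j, -, hj⟩ := mem_image.1 hx'
    have hj := congrArg Fin.val hj
    split_ifs at hj <;> simp only [upperRow] at hj ⊢ <;> omega
  by_cases hboth : u ∈ upper ∧ v ∈ upper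
  · refine ⟨lower, isIndepFinset_Fgraph_image_univ_of_ne_zero hlower fun i => ?_,
      card_image_univ_of_val_mod hlower, fun h => huv (Fin.ext ?_)⟩
    · split_ifs with hi
      · exact upperRow_val_ne_zero ha h2a i
      · exact hi
    · rw [hinter u hboth.1 h.1, hinter v hboth.2 h.2]
  · exact ⟨upper, isIndepFinset_Fgraph_image_univ_of_ne_zero (upperRow_val_mod h2a)
      (upperRow_val_ne_zero ha h2a), card_image_univ_of_val_mod (upperRow_val_mod h2a), hboth⟩

theorem exists_maxIndep_Fgraph_mem_of_not_adj (ha : 0 < a) (h2a : 2 * a ≤ n) {u v : Fin n}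
    (huv : u ≠ v) (hnadj : ¬ (Fgraph n a).Adj u v) :
    ∃ s, IsIndepFinset (Fgraph n a) s ∧ #s = a ∧ u ∈ s ∧ v ∈ s := by
  have hres : u.val % a ≠ v.val % a := fun h => hnadj ⟨huv, Or.inl h⟩
  have hu0 : u.val = 0 → a ≤ v.val := fun h => by
    by_contra! hv
    exact hnadj ⟨huv, Or.inr (Or.inl ⟨h, hv⟩)⟩
  have hv0 : v.val = 0 → a ≤ u.val := fun h => by
    by_contra! hu
    exact hnadj ⟨huv, Or.inr (Or.inr ⟨h, hu⟩)⟩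
  let c : Fin a → Fin n := fun i =>
    if u.val % a = i then u else if v.val % a = i then v else upperRow n a h2a i
  have hc : ∀ i, (c i).val % a = i := fun i => by
    simp only [c]
    split_ifs with hu hv
    · exact hu
    · exact hv
    · exact upperRow_val_mod h2a i
  have hcu : c ⟨u.val % a, Nat.mod_lt _ ha⟩ = u := if_pos rfl
  have hcv : c ⟨v.val % a, Nat.mod_lt _ ha⟩ = v := (if_neg hres).trans (if_pos rfl)
  refine ⟨univ.image c, (isIndepFinset_Fgraph_image_univ_iff hc).2 fun i j hi0 hij => ?_,
    card_image_univ_of_val_mod hc, hcu ▸ mem_image_of_mem c (mem_univ _),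
    hcv ▸ mem_image_of_mem c (mem_univ _)⟩
  rw [Ne, Fin.ext_iff] at hij
  simp only [c] at hi0 ⊢
  split_ifs at hi0 ⊢ <;> grind [upperRow]

end residues

theorem addEdge_Fgraph_of_two_le_general {n a : ℕ} (ha0 : 0 < a) (h2a : 2 * a ≤ n)
    (u v : Fin n) (huv : u ≠ v) (hnadj : ¬ (Fgraph n a).Adj u v)
    (G' : SimpleGraph (Fin n))
    (hG' : G' = Fgraph n a ⊔ SimpleGraph.fromEdgeSet {s(u, v)}) :
    indepNumber G' = a ∧ numMaxIndep G' < fFun n a := by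
  subst hG'
  have hαF := indepNumber_Fgraph ha0 h2a
  have hα : indepNumber (Fgraph n a ⊔ SimpleGraph.fromEdgeSet {s(u, v)}) = a := by
    obtain ⟨s, hs, hcard, hnot⟩ := exists_maxIndep_Fgraph_not_mem_both ha0 h2a huv
    exact indepNumber_eq
      (fun t ht => (ht.anti (Ggraph_le_Fgraph.trans le_sup_left)).card_le_of_Ggraph ha0)
      ⟨s, hs.sup_edge hnot, hcard⟩
  obtain ⟨s, hs, hcard, hus, hvs⟩ := exists_maxIndep_Fgraph_mem_of_not_adj ha0 h2a huv hnadj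
  refine ⟨hα, ?_⟩
  calc numMaxIndep _ < numMaxIndep (Fgraph n a) :=
        numMaxIndep_lt_of_le le_sup_left (hα.trans hαF.symm) hs (hcard.trans hαF.symm)
          fun h => h hus hvs huv (Or.inr ⟨rfl, huv⟩)
    _ ≤ fFun n a := numMaxIndep_Fgraph_le ha0 h2a

/-- **Lemma 2 (ii), case `n/α ≥ 2`.** Let `0 < α < n` with `n ≥ 2α`, and let `G'` arise from
`F(n,α)` by adding an edge `uv` between two non-adjacent vertices `u ≠ v` of `F(n,α)`.
Then `α(G') = α` and `♯α(G') < f(n,α)`. -/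
theorem addEdge_Fgraph_of_two_le {n a : ℕ} (ha0 : 0 < a) (han : a < n) (h2a : 2 * a ≤ n)
    (u v : Fin n) (huv : u ≠ v) (hnadj : ¬ (Fgraph n a).Adj u v)
    (G' : SimpleGraph (Fin n))
    (hG' : G' = Fgraph n a ⊔ SimpleGraph.fromEdgeSet {s(u, v)}) :
    indepNumber G' = a ∧ numMaxIndep G' < fFun n a :=
  addEdge_Fgraph_of_two_le_general ha0 h2a u v huv hnadj G' hG'
end

section
/- For all positive integers n and α with α < n, the graph G(n,α) has independence number α, has exactly α − (n mod α) components of order ⌊n/α⌋, and satisfies ♯α(G(n,α)) = g(n,α). -/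
open Finset

lemma range_filter_mod_card (a i : ℕ) (ha : 0 < a) (hi : i < a) (n : ℕ) :
    ((Finset.range n).filter (fun x => x % a = i)).card
      = n / a + if i < n % a then 1 else 0 := by
  induction n with
  | zero => simp [Nat.div_eq_of_lt ha]
  | succ n ih =>
    have hq := Nat.div_add_mod n a
    have hrlt : n % a < a := Nat.mod_lt _ ha
    have hrep : n + 1 = a * (n / a) + (n % a + 1) := by omega
    have hdiv : (n + 1) / a = n / a + (n % a + 1) / a := by
      rw [hrep, Nat.mul_add_div ha]
    have hmod : (n + 1) % a = (n % a + 1) % a := by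
      rw [hrep, Nat.mul_add_mod]
    rw [Finset.range_add_one, Finset.filter_insert]
    by_cases hc : n % a = i
    · rw [if_pos hc, Finset.card_insert_of_notMem (by simp), ih, hdiv, hmod]
      rcases Nat.lt_or_ge (n % a + 1) a with h | h
      · rw [Nat.div_eq_of_lt h, Nat.mod_eq_of_lt h]; split_ifs <;> omega
      · have h2 : n % a + 1 = a := by omega
        rw [h2, Nat.div_self ha, Nat.mod_self]; split_ifs <;> omega
    · rw [if_neg hc, ih, hdiv, hmod]
      rcases Nat.lt_or_ge (n % a + 1) a with h | h
      · rw [Nat.div_eq_of_lt h, Nat.mod_eq_of_lt h]; split_ifs <;> omega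
      · have h2 : n % a + 1 = a := by omega
        rw [h2, Nat.div_self ha, Nat.mod_self]; split_ifs <;> omega

lemma fin_filter_mod_card (n a i : ℕ) (ha : 0 < a) (hi : i < a) :
    ((Finset.univ : Finset (Fin n)).filter (fun v => v.val % a = i)).card
      = n / a + if i < n % a then 1 else 0 := by
  rw [← range_filter_mod_card a i ha hi n]
  rw [← Finset.card_image_of_injective _ Fin.val_injective]
  congr 1
  ext x
  simp only [Finset.mem_image, Finset.mem_filter, Finset.mem_univ, true_and,
    Finset.mem_range]
  constructor
  · rintro ⟨v, hv, rfl⟩; exact ⟨v.2, hv⟩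
  · rintro ⟨hx, hm⟩; exact ⟨⟨x, hx⟩, hm, rfl⟩

lemma fin_filter_lt_card (a r : ℕ) (hr : r ≤ a) :
    ((Finset.univ : Finset (Fin a)).filter (fun i => i.val < r)).card = r := by
  rw [← Finset.card_image_of_injective _ Fin.val_injective]
  have himg : (((Finset.univ : Finset (Fin a)).filter (fun i => i.val < r)).image Fin.val)
      = Finset.range r := by
    ext x
    simp only [Finset.mem_image, Finset.mem_filter, Finset.mem_univ, true_and,
      Finset.mem_range]
    constructor
    · rintro ⟨v, hv, rfl⟩; exact hv
    · intro hx; exact ⟨⟨x, lt_of_lt_of_le hx hr⟩, hx, rfl⟩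
  rw [himg, Finset.card_range]

lemma Ggraph_adj {n a : ℕ} {v w : Fin n} :
    (Ggraph n a).Adj v w ↔ v ≠ w ∧ v.val % a = w.val % a := Iff.rfl

lemma indep_card_le {n a : ℕ} (ha : 0 < a) {s : Finset (Fin n)}
    (hs : IsIndepFinset (Ggraph n a) s) : s.card ≤ a := by
  have hinj : Set.InjOn (fun v : Fin n => v.val % a) s := by
    intro u hu v hv h
    by_contra hne
    exact hs hu hv hne ⟨hne, h⟩
  calc s.card = (s.image (fun v => v.val % a)).card :=
        (Finset.card_image_of_injOn hinj).symm
    _ ≤ (Finset.range a).card := Finset.card_le_card (by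
        intro x hx
        simp only [Finset.mem_image] at hx
        obtain ⟨v, _, rfl⟩ := hx
        exact Finset.mem_range.mpr (Nat.mod_lt _ ha))
    _ = a := Finset.card_range a

lemma Ggraph_indepNumber (n a : ℕ) (ha0 : 0 < a) (han : a < n) :
    indepNumber (Ggraph n a) = a := by
  have hset : {k | ∃ s : Finset (Fin n), IsIndepFinset (Ggraph n a) s ∧ s.card = k}
      = Set.Iic a := by
    ext k
    simp only [Set.mem_setOf_eq, Set.mem_Iic]
    constructor
    · rintro ⟨s, hs, rfl⟩; exact indep_card_le ha0 hs
    · intro hk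
      refine ⟨(Finset.univ : Finset (Fin k)).image (Fin.castLE (hk.trans han.le)), ?_, ?_⟩
      · intro u hu v hv hne hadj
        simp only [Finset.mem_image, Finset.mem_univ, true_and] at hu hv
        obtain ⟨i, rfl⟩ := hu; obtain ⟨j, rfl⟩ := hv
        have h2 := hadj.2
        simp only [Fin.coe_castLE] at h2
        rw [Nat.mod_eq_of_lt (lt_of_lt_of_le i.2 hk),
          Nat.mod_eq_of_lt (lt_of_lt_of_le j.2 hk)] at h2
        exact hne (congrArg _ (Fin.ext h2))
      · rw [Finset.card_image_of_injective _ (Fin.castLE_injective _),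
          Finset.card_univ, Fintype.card_fin]
  rw [indepNumber, hset, csSup_Iic]

lemma Ggraph_reachable {n a : ℕ} {v w : Fin n} :
    (Ggraph n a).Reachable v w ↔ v.val % a = w.val % a := by
  constructor
  · rintro ⟨p⟩
    induction p with
    | nil => rfl
    | cons h _ ih => exact h.2.trans ih
  · intro h
    by_cases hvw : v = w
    · exact hvw ▸ SimpleGraph.Reachable.refl v
    · exact SimpleGraph.Adj.reachable ⟨hvw, h⟩

lemma Ggraph_supp_ncard (n a : ℕ) (ha : 0 < a) (v : Fin n) :
    ((Ggraph n a).connectedComponentMk v).supp.ncard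
      = n / a + if v.val % a < n % a then 1 else 0 := by
  have hsupp : ((Ggraph n a).connectedComponentMk v).supp
      = {w : Fin n | w.val % a = v.val % a} := by
    ext w
    simp [SimpleGraph.ConnectedComponent.mem_supp_iff,
      SimpleGraph.ConnectedComponent.eq, Ggraph_reachable, eq_comm]
  rw [hsupp, Set.ncard_eq_toFinset_card', Set.toFinset_setOf]
  exact fin_filter_mod_card n a _ ha (Nat.mod_lt _ ha)

lemma Ggraph_comp_count (n a : ℕ) (ha0 : 0 < a) (han : a < n) :
    {c : (Ggraph n a).ConnectedComponent | c.supp.ncard = n / a}.ncard = a - n % a := by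
  classical
  set φ : Fin a → (Ggraph n a).ConnectedComponent :=
    fun i => (Ggraph n a).connectedComponentMk ⟨i, i.2.trans han⟩ with hφ
  have hφinj : Function.Injective φ := by
    intro i j h
    have h2 := Ggraph_reachable.mp (SimpleGraph.ConnectedComponent.eq.mp h)
    simp only at h2
    rw [Nat.mod_eq_of_lt i.2, Nat.mod_eq_of_lt j.2] at h2
    exact Fin.ext h2
  have hseteq : {c : (Ggraph n a).ConnectedComponent | c.supp.ncard = n / a}
      = φ '' {i : Fin a | ¬ i.val < n % a} := by
    ext c
    induction c using SimpleGraph.ConnectedComponent.ind with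
    | _ v => ?_
    simp only [Set.mem_setOf_eq, Set.mem_image]
    rw [Ggraph_supp_ncard n a ha0 v]
    constructor
    · intro h
      have hite : ¬ v.val % a < n % a := by
        by_contra hc
        rw [if_pos hc] at h
        omega
      refine ⟨⟨v.val % a, Nat.mod_lt _ ha0⟩, hite, ?_⟩
      refine SimpleGraph.ConnectedComponent.eq.mpr (Ggraph_reachable.mpr ?_)
      simp [Nat.mod_mod_of_dvd, Nat.mod_eq_of_lt (Nat.mod_lt v.val ha0)]
    · rintro ⟨i, hi, hic⟩
      have h2 := Ggraph_reachable.mp (SimpleGraph.ConnectedComponent.eq.mp hic)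
      simp only at h2
      rw [Nat.mod_eq_of_lt i.2] at h2
      rw [if_neg (h2 ▸ hi), Nat.add_zero]
  rw [hseteq, Set.ncard_image_of_injective _ hφinj,
    Set.ncard_eq_toFinset_card', Set.toFinset_setOf]
  have hpos := Finset.card_filter_add_card_filter_not
    (s := (Finset.univ : Finset (Fin a))) (p := fun i => i.val < n % a)
  rw [fin_filter_lt_card a (n % a) (Nat.mod_lt _ ha0).le, Finset.card_univ,
    Fintype.card_fin] at hpos
  omega

lemma existsUnique_rep {n a : ℕ} (ha0 : 0 < a) {s : Finset (Fin n)}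
    (hs : IsIndepFinset (Ggraph n a) s) (hcard : s.card = a) (i : Fin a) :
    ∃! v, v ∈ s ∧ v.val % a = i.val := by
  have hinjOn : Set.InjOn (fun v : Fin n => v.val % a) s := by
    intro u hu v hv h
    by_contra hne
    exact hs hu hv hne ⟨hne, h⟩
  have himg : s.image (fun v => v.val % a) = Finset.range a := by
    apply Finset.eq_of_subset_of_card_le
    · intro x hx
      simp only [Finset.mem_image] at hx
      obtain ⟨v, _, rfl⟩ := hx
      exact Finset.mem_range.mpr (Nat.mod_lt _ ha0)
    · rw [Finset.card_range, Finset.card_image_of_injOn hinjOn, hcard]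
  have hmem : i.val ∈ s.image (fun v => v.val % a) := himg ▸ Finset.mem_range.mpr i.2
  simp only [Finset.mem_image] at hmem
  obtain ⟨v, hv, hvi⟩ := hmem
  refine ⟨v, ⟨hv, hvi⟩, ?_⟩
  rintro w ⟨hw, hwi⟩
  by_contra hne
  exact hs hw hv hne ⟨hne, hwi.trans hvi.symm⟩

lemma image_indep {n a : ℕ} (ha0 : 0 < a) (han : a < n) (g : Fin a → Fin n)
    (hg : ∀ i, (g i).val % a = i.val) :
    IsIndepFinset (Ggraph n a) (Finset.univ.image g) ∧
      (Finset.univ.image g).card = a := by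
  have hinj : Function.Injective g := by
    intro i j h
    apply Fin.ext
    rw [← hg i, ← hg j, h]
  constructor
  · intro u hu v hv hne hadj
    simp only [Finset.mem_image, Finset.mem_univ, true_and] at hu hv
    obtain ⟨i, rfl⟩ := hu; obtain ⟨j, rfl⟩ := hv
    have h2 := hadj.2
    rw [hg i, hg j] at h2
    exact hne (by rw [Fin.ext h2])
  · rw [Finset.card_image_of_injective _ hinj, Finset.card_univ, Fintype.card_fin]

lemma ceil_div_eq {n a : ℕ} (ha0 : 0 < a) (hr : n % a ≠ 0) :
    (n + a - 1) / a = n / a + 1 := by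
  have hq := Nat.div_add_mod n a
  have hra : n % a < a := Nat.mod_lt _ ha0
  have hrep : n + a - 1 = a * (n / a + 1) + (n % a - 1) := by
    rw [Nat.mul_add, Nat.mul_one]; omega
  rw [hrep, Nat.mul_add_div ha0, Nat.div_eq_of_lt (show n % a - 1 < a by omega),
    Nat.add_zero]

lemma Ggraph_numMaxIndep (n a : ℕ) (ha0 : 0 < a) (han : a < n) :
    numMaxIndep (Ggraph n a) = gFun n a := by
  classical
  rw [numMaxIndep, Ggraph_indepNumber n a ha0 han]
  have h1 : {s : Finset (Fin n) | IsIndepFinset (Ggraph n a) s ∧ s.card = a}.ncard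
      = Nat.card {s : Finset (Fin n) // IsIndepFinset (Ggraph n a) s ∧ s.card = a} := by
    rw [← Nat.card_coe_set_eq]; rfl
  rw [h1]
  have e : {s : Finset (Fin n) // IsIndepFinset (Ggraph n a) s ∧ s.card = a}
      ≃ (∀ i : Fin a, {v : Fin n // v.val % a = i.val}) :=
  { toFun := fun s i =>
      ⟨s.1.choose (fun v => v.val % a = i.val) (existsUnique_rep ha0 s.2.1 s.2.2 i),
        Finset.choose_property (fun v : Fin n => v.val % a = i.val) s.1
          (existsUnique_rep ha0 s.2.1 s.2.2 i)⟩
    invFun := fun f =>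
      ⟨Finset.univ.image (fun i => (f i).1),
        image_indep ha0 han _ (fun i => (f i).2)⟩
    left_inv := by
      rintro ⟨s, hs, hcard⟩
      apply Subtype.ext
      dsimp only
      apply Finset.eq_of_subset_of_card_le
      · intro x hx
        simp only [Finset.mem_image, Finset.mem_univ, true_and] at hx
        obtain ⟨i, rfl⟩ := hx
        exact Finset.choose_mem _ _ _
      · exact le_of_eq (hcard.trans
          (image_indep ha0 han
            (fun i : Fin a => s.choose (fun v => v.val % a = i.val)
              (existsUnique_rep ha0 hs hcard i))
            (fun i => Finset.choose_property (fun v : Fin n => v.val % a = i.val) s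
              (existsUnique_rep ha0 hs hcard i))).2.symm)
    right_inv := by
      intro f
      funext i
      apply Subtype.ext
      have hu := existsUnique_rep ha0
        (image_indep ha0 han (fun j => (f j).1) (fun j => (f j).2)).1
        (image_indep ha0 han (fun j => (f j).1) (fun j => (f j).2)).2 i
      exact hu.unique
        ⟨Finset.choose_mem _ _ _,
          Finset.choose_property (fun v : Fin n => v.val % a = i.val) _
            (existsUnique_rep ha0
              (image_indep ha0 han (fun j => (f j).1) (fun j => (f j).2)).1
              (image_indep ha0 han (fun j => (f j).1) (fun j => (f j).2)).2 i)⟩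
        ⟨Finset.mem_image.mpr ⟨i, Finset.mem_univ i, rfl⟩, (f i).2⟩ }
  rw [Nat.card_congr e, Nat.card_pi]
  have hcards : ∀ i : Fin a,
      Nat.card {v : Fin n // v.val % a = i.val}
        = if (i : ℕ) < n % a then n / a + 1 else n / a := by
    intro i
    rw [Nat.card_eq_fintype_card, Fintype.card_subtype,
      fin_filter_mod_card n a i.val ha0 i.2]
    split_ifs <;> omega
  rw [Finset.prod_congr rfl (fun i _ => hcards i), Finset.prod_ite,
    Finset.prod_const, Finset.prod_const,
    fin_filter_lt_card a (n % a) (Nat.mod_lt _ ha0).le]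
  have hpos := Finset.card_filter_add_card_filter_not
    (s := (Finset.univ : Finset (Fin a))) (p := fun i : Fin a => i.val < n % a)
  rw [fin_filter_lt_card a (n % a) (Nat.mod_lt _ ha0).le, Finset.card_univ,
    Fintype.card_fin] at hpos
  rw [show (Finset.filter (fun i : Fin a => ¬ i.val < n % a) Finset.univ).card
      = a - n % a by omega]
  rw [gFun]
  by_cases hr : n % a = 0
  · rw [hr]; simp [Nat.mul_comm]
  · rw [ceil_div_eq ha0 hr, Nat.mul_comm]

/-- For all `0 < α < n`, the graph `G(n,α)` has independence number `α`, has exactly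
`α − (n mod α)` connected components of order `⌊n/α⌋`, and satisfies `♯α(G(n,α)) = g(n,α)`. -/
theorem Ggraph_indepNumber_components_numMaxIndep (n a : ℕ) (ha0 : 0 < a) (han : a < n) :
    indepNumber (Ggraph n a) = a ∧
      {c : (Ggraph n a).ConnectedComponent | c.supp.ncard = n / a}.ncard = a - n % a ∧
      numMaxIndep (Ggraph n a) = gFun n a :=
  ⟨Ggraph_indepNumber n a ha0 han, Ggraph_comp_count n a ha0 han,
    Ggraph_numMaxIndep n a ha0 han⟩
end
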